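/- arXiv:1810.05287 — 4 statements merged into one kernel-verified Lean document; each statement's English description precedes it below -/
import Mathlib

section
/- Let T ∈ ℕ and consider a deterministic array (p_t, c_t)_{t=0}^{T} with p_t ∈ ℝ^L_{++} and c_t ∈ ℝ^L_+ \ {0}. The array is R-rationalizable if and only if there exist a concave, locally nonsatiated, continuous utility function u : ℝ^L_+ → ℝ and, for each t ∈ {0,…,T}, a scalar λ_t > 0 and a supergradient ξ_t ∈ ∂u(c_t) such that ξ_{t,j} ≤ λ_t p_{t,j} for every coordinate j = 1,…,L, with equality ξ_{t,j} = λ_t p_{t,j} whenever c_{t,j} ≠ 0. -/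
/-!
(⇐) On the budget hyperplane `p_tᵀ z = p_tᵀ c_t`, the supergradient inequality and complementary
slackness give `u z - u c_t ≤ ξ_tᵀ (z - c_t) ≤ λ_t p_tᵀ (z - c_t) = 0`.

(⇒) The indirect utility `V(m) = max {u z : z ≥ 0, pᵀ z = m}` is attained (compact budget sets),
concave on `(0, ∞)` (concavity of `u`), and not maximized at `y` (local nonsatiation: otherwise
`u` would have a global maximum on `ℝ^L_+`). A supergradient `λ` of `V` at `y` is therefore
positive, and `λ p` is a supergradient of `u` at `c`, since `u z ≤ V(pᵀ z) ≤ V(y) + λ (pᵀ z - y)`.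
-/

open MeasureTheory Filter Topology Finset

noncomputable section

/-- Vectors in ℝ^L with the Euclidean norm. -/
abbrev Vec (L : ℕ) := EuclideanSpace ℝ (Fin L)

/-- Inner product (dot product) of two vectors. -/
def dotp {L : ℕ} (p c : Vec L) : ℝ := ∑ j, p j * c j

/-- Componentwise nonnegative vectors: the set ℝ^L_+. -/
def NonnegV {L : ℕ} (c : Vec L) : Prop := ∀ j, 0 ≤ c j

/-- The consumption space ℝ^L_+ \ {0}. -/
def ConsV {L : ℕ} (c : Vec L) : Prop := NonnegV c ∧ c ≠ 0

/-- Componentwise strictly positive vectors: the set ℝ^L_{++}. -/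
def PosV {L : ℕ} (p : Vec L) : Prop := ∀ j, 0 < p j

/-- Concavity of u on its domain ℝ^L_+. -/
def IsConcaveNN {L : ℕ} (u : Vec L → ℝ) : Prop :=
  ∀ c c' : Vec L, NonnegV c → NonnegV c' → ∀ a : ℝ, 0 ≤ a → a ≤ 1 →
    a * u c + (1 - a) * u c' ≤ u (a • c + (1 - a) • c')

/-- Local nonsatiation of u on its domain ℝ^L_+. -/
def LocallyNonsatiatedNN {L : ℕ} (u : Vec L → ℝ) : Prop :=
  ∀ c : Vec L, NonnegV c → ∀ ε : ℝ, 0 < ε →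
    ∃ c' : Vec L, NonnegV c' ∧ ‖c' - c‖ < ε ∧ u c < u c'

/-- Continuity of u on its domain ℝ^L_+. -/
def ContinuousNN {L : ℕ} (u : Vec L → ℝ) : Prop := ContinuousOn u {c | NonnegV c}

/-- A concave, locally nonsatiated, continuous utility function on ℝ^L_+. -/
def NiceUtility {L : ℕ} (u : Vec L → ℝ) : Prop :=
  IsConcaveNN u ∧ LocallyNonsatiatedNN u ∧ ContinuousNN u

/-- ξ is a supergradient of u at c: u(c') − u(c) ≤ ξᵀ(c'−c) for all c' ∈ ℝ^L_+ \ {0}. -/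
def Supergrad {L : ℕ} (u : Vec L → ℝ) (c ξ : Vec L) : Prop :=
  ∀ c' : Vec L, ConsV c' → u c' - u c ≤ dotp ξ (c' - c)

/-- R-rationalizability: there exist a nice utility u and income levels y_t > 0 such that
each c_t maximizes u over {c ∈ ℝ^L_+ : p_tᵀ c = y_t}. -/
def RRat {L T : ℕ} (p c : Fin (T + 1) → Vec L) : Prop :=
  ∃ u : Vec L → ℝ, ∃ y : Fin (T + 1) → ℝ,
    NiceUtility u ∧ (∀ t, 0 < y t) ∧
    ∀ t, dotp (p t) (c t) = y t ∧
      ∀ z : Vec L, NonnegV z → dotp (p t) z = y t → u z ≤ u (c t)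

open Set

section Budget

variable {L : ℕ}

lemma dotp_eq_inner (p c : Vec L) : dotp p c = inner ℝ p c := by
  simp [dotp, PiLp.inner_apply, mul_comm]

lemma dotp_smul_left (a : ℝ) (p c : Vec L) : dotp (a • p) c = a * dotp p c := by
  simp only [dotp_eq_inner, real_inner_smul_left]

lemma dotp_smul_right (a : ℝ) (p c : Vec L) : dotp p (a • c) = a * dotp p c := by
  simp only [dotp_eq_inner, real_inner_smul_right]

lemma dotp_add_right (p c c' : Vec L) : dotp p (c + c') = dotp p c + dotp p c' := by
  simp only [dotp_eq_inner, inner_add_right]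

lemma dotp_sub_right (p c c' : Vec L) : dotp p (c - c') = dotp p c - dotp p c' := by
  simp only [dotp_eq_inner, inner_sub_right]

lemma continuous_dotp (p : Vec L) : Continuous (dotp p) := by
  unfold dotp
  fun_prop

lemma dotp_pos {p c : Vec L} (hp : PosV p) (hc : ConsV c) : 0 < dotp p c := by
  obtain ⟨j, hj⟩ : ∃ j, c j ≠ 0 := by
    by_contra! h
    exact hc.2 (PiLp.ext h)
  exact Finset.sum_pos' (fun i _ => mul_nonneg (hp i).le (hc.1 i))
    ⟨j, Finset.mem_univ j, mul_pos (hp j) ((hc.1 j).lt_of_ne' hj)⟩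

lemma isClosed_setOf_nonnegV : IsClosed {c : Vec L | NonnegV c} := by
  simp only [NonnegV, ofPred_forall]
  exact isClosed_iInter fun j => isClosed_le continuous_const (PiLp.continuous_apply 2 _ j)

lemma isCompact_setOf_nonnegV_dotp_le {p : Vec L} (hp : PosV p) (r : ℝ) :
    IsCompact {z : Vec L | NonnegV z ∧ dotp p z ≤ r} := by
  refine Metric.isCompact_of_isClosed_isBounded
    (isClosed_setOf_nonnegV.inter (isClosed_le (continuous_dotp p) continuous_const)) ?_
  refine (Metric.isBounded_closedBall (x := 0) (r := √(∑ j, (r / p j) ^ 2))).subset ?_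
  rintro z ⟨hz, hzr⟩
  rw [Metric.mem_closedBall, dist_zero_right, EuclideanSpace.norm_eq]
  gcongr with j
  have hpz : p j * z j ≤ r := (Finset.single_le_sum (f := fun i => p i * z i)
    (fun i _ => mul_nonneg (hp i).le (hz i)) (Finset.mem_univ j)).trans hzr
  rw [Real.norm_of_nonneg (hz j)]
  exact (le_div_iff₀' (hp j)).mpr hpz

def budgetSet (p : Vec L) (m : ℝ) : Set (Vec L) := {z | NonnegV z ∧ dotp p z = m}

lemma isCompact_budgetSet {p : Vec L} (hp : PosV p) (m : ℝ) : IsCompact (budgetSet p m) :=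
  (isCompact_setOf_nonnegV_dotp_le hp m).of_isClosed_subset
    (isClosed_setOf_nonnegV.inter (isClosed_eq (continuous_dotp p) continuous_const))
    fun _ hz => ⟨hz.1, hz.2.le⟩

lemma budgetSet_nonempty {p c : Vec L} {y m : ℝ} (hc : c ∈ budgetSet p y) (hy : 0 < y)
    (hm : 0 ≤ m) : (budgetSet p m).Nonempty := by
  refine ⟨(m / y) • c, fun j => ?_, ?_⟩
  · simpa only [PiLp.smul_apply, smul_eq_mul] using mul_nonneg (div_nonneg hm hy.le) (hc.1 j)
  · rw [dotp_smul_right, hc.2, div_mul_cancel₀ _ hy.ne']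

end Budget

lemma ConcaveOn.exists_le_add_mul_sub {S : Set ℝ} {f : ℝ → ℝ} {y : ℝ} (hf : ConcaveOn ℝ S f)
    (hy : y ∈ interior S) : ∃ lam : ℝ, ∀ m ∈ S, f m ≤ f y + lam * (m - y) := by
  have hg : ConvexOn ℝ S (-f) := hf.neg
  set d := derivWithin (-f) (Ioi y) y
  refine ⟨-d, fun m hm => ?_⟩
  rcases lt_trichotomy m y with hmy | rfl | hym
  · have hslope : slope (-f) m y ≤ d :=
      (hg.slope_le_leftDeriv_of_mem_interior hm hy hmy).trans
        (hg.leftDeriv_le_rightDeriv_of_mem_interior hy)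
    rw [slope_def_field, div_le_iff₀ (sub_pos.mpr hmy)] at hslope
    simp only [Pi.neg_apply] at hslope
    linarith
  · simp
  · have hslope : d ≤ slope (-f) y m := hg.rightDeriv_le_slope_of_mem_interior hy hm hym
    rw [slope_def_field, le_div_iff₀ (sub_pos.mpr hym)] at hslope
    simp only [Pi.neg_apply] at hslope
    linarith

section IndirectUtility

variable {L : ℕ} {u : Vec L → ℝ} {p : Vec L}

/-- The indirect utility `V(m) = max {u z : z ∈ ℝ^L_+, pᵀ z = m}`; the `sSup` is a junk value
unless the budget set is nonempty and `u` is bounded on it. -/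
def indirectUtility (u : Vec L → ℝ) (p : Vec L) (m : ℝ) : ℝ := sSup (u '' budgetSet p m)

lemma exists_isMaxOn_budgetSet (hu : ContinuousNN u) (hp : PosV p) {m : ℝ}
    (hne : (budgetSet p m).Nonempty) : ∃ z ∈ budgetSet p m, IsMaxOn u (budgetSet p m) z :=
  (isCompact_budgetSet hp m).exists_isMaxOn hne (hu.mono fun _ hz => hz.1)

lemma IsMaxOn.indirectUtility_eq {m : ℝ} {z : Vec L} (hz : z ∈ budgetSet p m)
    (hmax : IsMaxOn u (budgetSet p m) z) : indirectUtility u p m = u z :=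
  IsGreatest.csSup_eq ⟨mem_image_of_mem u hz, forall_mem_image.mpr hmax⟩

lemma le_indirectUtility (hu : ContinuousNN u) (hp : PosV p) {m : ℝ} {z : Vec L}
    (hz : z ∈ budgetSet p m) : u z ≤ indirectUtility u p m := by
  obtain ⟨z₀, hz₀, hmax⟩ := exists_isMaxOn_budgetSet hu hp ⟨z, hz⟩
  exact hmax.indirectUtility_eq hz₀ ▸ hmax hz

lemma concaveOn_indirectUtility (hconc : IsConcaveNN u) (hcont : ContinuousNN u) (hp : PosV p)
    (hne : ∀ m, 0 < m → (budgetSet p m).Nonempty) :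
    ConcaveOn ℝ (Ioi 0) (indirectUtility u p) := by
  refine ⟨convex_Ioi 0, fun a ha b hb μ ν hμ hν hμν => ?_⟩
  obtain rfl : ν = 1 - μ := by linarith
  obtain ⟨za, hza, hmaxa⟩ := exists_isMaxOn_budgetSet hcont hp (hne a ha)
  obtain ⟨zb, hzb, hmaxb⟩ := exists_isMaxOn_budgetSet hcont hp (hne b hb)
  have hmix : μ • za + (1 - μ) • zb ∈ budgetSet p (μ * a + (1 - μ) * b) := by
    refine ⟨fun j => ?_, ?_⟩
    · simp only [PiLp.add_apply, PiLp.smul_apply, smul_eq_mul]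
      exact add_nonneg (mul_nonneg hμ (hza.1 j)) (mul_nonneg hν (hzb.1 j))
    · rw [dotp_add_right, dotp_smul_right, dotp_smul_right, hza.2, hzb.2]
  calc μ • indirectUtility u p a + (1 - μ) • indirectUtility u p b
      = μ * u za + (1 - μ) * u zb := by
        rw [hmaxa.indirectUtility_eq hza, hmaxb.indirectUtility_eq hzb, smul_eq_mul, smul_eq_mul]
    _ ≤ u (μ • za + (1 - μ) • zb) := hconc za zb hza.1 hzb.1 μ hμ (by linarith)
    _ ≤ indirectUtility u p (μ • a + (1 - μ) • b) := le_indirectUtility hcont hp hmix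

lemma exists_indirectUtility_gt (hlns : LocallyNonsatiatedNN u) (hcont : ContinuousNN u)
    (hp : PosV p) {y : ℝ} (hne : (budgetSet p y).Nonempty) :
    ∃ m, y < m ∧ indirectUtility u p y < indirectUtility u p m := by
  by_contra! hsat
  obtain ⟨zy, hzy, hmaxy⟩ := exists_isMaxOn_budgetSet hcont hp hne
  obtain ⟨zs, hzs, hmaxs⟩ := (isCompact_setOf_nonnegV_dotp_le hp y).exists_isMaxOn
    ⟨zy, hzy.1, hzy.2.le⟩ (hcont.mono fun _ hz => hz.1)
  have hglobal : ∀ w, NonnegV w → u w ≤ u zs := by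
    intro w hw
    rcases le_or_gt (dotp p w) y with hwy | hyw
    · exact hmaxs ⟨hw, hwy⟩
    · calc u w ≤ indirectUtility u p (dotp p w) := le_indirectUtility hcont hp ⟨hw, rfl⟩
        _ ≤ indirectUtility u p y := hsat _ hyw
        _ = u zy := hmaxy.indirectUtility_eq hzy
        _ ≤ u zs := hmaxs ⟨hzy.1, hzy.2.le⟩
  obtain ⟨w, hw, -, hlt⟩ := hlns zs hzs.1 1 one_pos
  exact (hglobal w hw).not_gt hlt

end IndirectUtility

section Rationalization

variable {L : ℕ} {u : Vec L → ℝ} {p c : Vec L}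

lemma exists_supergrad_smul_of_isMaxOn_budgetSet (hu : NiceUtility u) (hp : PosV p) {y : ℝ}
    (hy : 0 < y) (hc : c ∈ budgetSet p y) (hmax : IsMaxOn u (budgetSet p y) c) :
    ∃ lam : ℝ, 0 < lam ∧ Supergrad u c (lam • p) := by
  obtain ⟨hconc, hlns, hcont⟩ := hu
  have hV := concaveOn_indirectUtility hconc hcont hp fun m hm => budgetSet_nonempty hc hy hm.le
  have hy' : y ∈ interior (Ioi 0) := by rwa [interior_Ioi]
  obtain ⟨lam, hlam⟩ := hV.exists_le_add_mul_sub hy'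
  obtain ⟨m, hym, hVm⟩ := exists_indirectUtility_gt hlns hcont hp ⟨c, hc⟩
  have hVy := hmax.indirectUtility_eq hc
  refine ⟨lam, ?_, fun z hz => ?_⟩
  · have hVm_le := hlam m (hy.trans hym)
    nlinarith
  · have hVz := hlam _ (dotp_pos hp hz)
    have huz := le_indirectUtility hcont hp (show z ∈ budgetSet p (dotp p z) from ⟨hz.1, rfl⟩)
    rw [dotp_smul_left, dotp_sub_right, hc.2]
    linarith

lemma dotp_sub_le_of_complementarySlackness {ξ z : Vec L} {lam : ℝ}
    (hle : ∀ j, ξ j ≤ lam * p j) (heq : ∀ j, c j ≠ 0 → ξ j = lam * p j) (hz : NonnegV z) :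
    dotp ξ (z - c) ≤ lam * (dotp p z - dotp p c) := by
  rw [← dotp_sub_right, ← dotp_smul_left]
  refine Finset.sum_le_sum fun j _ => ?_
  simp only [PiLp.sub_apply, PiLp.smul_apply, smul_eq_mul]
  by_cases hcj : c j = 0
  · rw [hcj, sub_zero]
    exact mul_le_mul_of_nonneg_right (hle j) (hz j)
  · rw [heq j hcj]

lemma Supergrad.isMaxOn_budgetSet {ξ : Vec L} {lam : ℝ} (hξ : Supergrad u c ξ)
    (hle : ∀ j, ξ j ≤ lam * p j) (heq : ∀ j, c j ≠ 0 → ξ j = lam * p j) (hp : PosV p)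
    (hc : ConsV c) : IsMaxOn u (budgetSet p (dotp p c)) c := by
  intro z ⟨hz, hzc⟩
  have hz0 : z ≠ 0 := by
    rintro rfl
    rw [dotp_eq_inner, inner_zero_right] at hzc
    exact (dotp_pos hp hc).ne hzc
  have hsup := hξ z ⟨hz, hz0⟩
  have hslack := dotp_sub_le_of_complementarySlackness hle heq hz
  rw [hzc, sub_self, mul_zero] at hslack
  show u z ≤ u c
  linarith

end Rationalization

/-- the array (p_t, c_t) is R-rationalizable iff there exist a concave,
locally nonsatiated, continuous u and, for each t, λ_t > 0 and a supergradient
ξ_t ∈ ∂u(c_t) with ξ_{t,j} ≤ λ_t p_{t,j} for all j, with equality whenever c_{t,j} ≠ 0. -/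
theorem stmt_0 {L T : ℕ} (p c : Fin (T + 1) → Vec L)
    (hp : ∀ t, PosV (p t)) (hc : ∀ t, ConsV (c t)) :
    RRat p c ↔
      ∃ u : Vec L → ℝ, NiceUtility u ∧
        ∀ t, ∃ lam : ℝ, 0 < lam ∧ ∃ ξ : Vec L, Supergrad u (c t) ξ ∧
          (∀ j, ξ j ≤ lam * p t j) ∧ (∀ j, c t j ≠ 0 → ξ j = lam * p t j) := by
  constructor
  · rintro ⟨u, y, hu, hy, hopt⟩
    refine ⟨u, hu, fun t => ?_⟩
    obtain ⟨lam, hlam, hsg⟩ := exists_supergrad_smul_of_isMaxOn_budgetSet hu (hp t) (hy t)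
      ⟨(hc t).1, (hopt t).1⟩ fun z hz => (hopt t).2 z hz.1 hz.2
    exact ⟨lam, hlam, lam • p t, hsg, fun j => le_rfl, fun j _ => rfl⟩
  · rintro ⟨u, hu, h⟩
    refine ⟨u, fun t => dotp (p t) (c t), hu, fun t => dotp_pos (hp t) (hc t),
      fun t => ⟨rfl, fun z hz hzc => ?_⟩⟩
    obtain ⟨lam, -, ξ, hξ, hle, heq⟩ := h t
    exact hξ.isMaxOn_budgetSet hle heq (hp t) (hc t) ⟨hz, hzc⟩

end
end

section
/- Let T ∈ ℕ, let ρ_t ∈ ℝ^L_{++}, c_t ∈ ℝ^L_+ \ {0}, and μ_t > 0 for t ∈ {0,…,T}, and suppose there exist real numbers v_t such that v_t − v_s ≥ μ_t ρ_tᵀ (c_t − c_s) for all t, s ∈ {0,…,T}. Fix t̂ ∈ {0,…,T} and define u(c) = inf over all finite sequences t_1, …, t_m ∈ {0,…,T} with t_1 = t̂ of Σ_{i=1}^{m−1} μ_{t_i} ρ_{t_i}ᵀ (c_{t_{i+1}} − c_{t_i}) + μ_{t_m} ρ_{t_m}ᵀ (c − c_{t_m}), for c ∈ ℝ^L_+ \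 {0}. Then u is real-valued (the infimum is finite for every c), concave, continuous, and locally nonsatiated, and for every t ∈ {0,…,T} the vector μ_t ρ_t is a supergradient of u at c_t, i.e., u(c) − u(c_t) ≤ μ_t ρ_tᵀ (c − c_t) for all c ∈ ℝ^L_+ \ {0}. -/
open MeasureTheory Filter Topology Finset

noncomputable section

/-- The value of a chain t_1, …, t_{m+1} (encoded by `seq 0, …, seq m`, with `seq 0 = t̂`)
evaluated at the point x:
Σ_{i=1}^{m} μ_{t_i} ρ_{t_i}ᵀ (c_{t_{i+1}} − c_{t_i}) + μ_{t_{m+1}} ρ_{t_{m+1}}ᵀ (x − c_{t_{m+1}}). -/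
def chainVal {L T : ℕ} (ρ c : Fin (T + 1) → Vec L) (μ : Fin (T + 1) → ℝ)
    (m : ℕ) (seq : ℕ → Fin (T + 1)) (x : Vec L) : ℝ :=
  (∑ i ∈ Finset.range m, μ (seq i) * dotp (ρ (seq i)) (c (seq (i + 1)) - c (seq i)))
    + μ (seq m) * dotp (ρ (seq m)) (x - c (seq m))

/-- The set of all chain values at x, over finite sequences starting at t̂. -/
def chainSet {L T : ℕ} (ρ c : Fin (T + 1) → Vec L) (μ : Fin (T + 1) → ℝ)
    (that : Fin (T + 1)) (x : Vec L) : Set ℝ :=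
  {r | ∃ (m : ℕ) (seq : ℕ → Fin (T + 1)), seq 0 = that ∧ r = chainVal ρ c μ m seq x}

/-- The Afriat-style utility u(x) = inf of chain values at x. -/
def afriatU {L T : ℕ} (ρ c : Fin (T + 1) → Vec L) (μ : Fin (T + 1) → ℝ)
    (that : Fin (T + 1)) (x : Vec L) : ℝ :=
  sInf (chainSet ρ c μ that x)

section AfriatAux

variable {L T : ℕ}

lemma dotp_sub (p x y : Vec L) : dotp p (x - y) = dotp p x - dotp p y := by
  simp [dotp, mul_sub, Finset.sum_sub_distrib]

lemma dotp_neg_sub (p x y : Vec L) : dotp p (x - y) = -(dotp p (y - x)) := by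
  rw [dotp_sub, dotp_sub]; ring

lemma dotp_add_smul (p x z : Vec L) (a : ℝ) :
    dotp p (x + a • z) = dotp p x + a * dotp p z := by
  simp [dotp, mul_add, Finset.sum_add_distrib, Finset.mul_sum]
  exact Finset.sum_congr rfl fun j _ => by ring

lemma dotp_comb (p x x' y : Vec L) (a : ℝ) :
    dotp p (a • x + (1 - a) • x' - y)
      = a * dotp p (x - y) + (1 - a) * dotp p (x' - y) := by
  simp only [dotp, Finset.mul_sum, ← Finset.sum_add_distrib]
  refine Finset.sum_congr rfl fun j _ => ?_
  have h1 : (a • x + (1 - a) • x' - y) j = a * x j + (1 - a) * x' j - y j := rfl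
  have h2 : (x - y) j = x j - y j := rfl
  have h3 : (x' - y) j = x' j - y j := rfl
  rw [h1, h2, h3]; ring

lemma dotp_cont (p : Vec L) : Continuous fun x : Vec L => dotp p x := by
  unfold dotp; fun_prop

lemma dotp_zero (p : Vec L) : dotp p 0 = 0 := by simp [dotp]

/-- The componentwise-one vector. -/
noncomputable def allOnes (L : ℕ) : Vec L := (WithLp.equiv 2 (Fin L → ℝ)).symm fun _ => 1

lemma allOnes_apply (j : Fin L) : allOnes L j = 1 := rfl

variable (ρ c : Fin (T + 1) → Vec L) (μ : Fin (T + 1) → ℝ) (that : Fin (T + 1))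

lemma chainSet_nonempty (x : Vec L) : (chainSet ρ c μ that x).Nonempty :=
  ⟨chainVal ρ c μ 0 (fun _ => that) x, 0, fun _ => that, rfl, rfl⟩

lemma chainSet_extend (t : Fin (T + 1)) (x : Vec L) (r : ℝ)
    (hr : r ∈ chainSet ρ c μ that (c t)) :
    r + μ t * dotp (ρ t) (x - c t) ∈ chainSet ρ c μ that x := by
  obtain ⟨m, seq, h0, rfl⟩ := hr
  refine ⟨m + 1, fun i => if i ≤ m then seq i else t, by simp [h0], ?_⟩
  unfold chainVal
  rw [Finset.sum_range_succ]
  have hm : (if m ≤ m then seq m else t) = seq m := if_pos le_rfl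
  have hm1 : (if m + 1 ≤ m then seq (m + 1) else t) = t := if_neg (by omega)
  have hsum : ∀ i ∈ Finset.range m,
      μ (if i ≤ m then seq i else t) * dotp (ρ (if i ≤ m then seq i else t))
        (c (if i + 1 ≤ m then seq (i + 1) else t) - c (if i ≤ m then seq i else t))
      = μ (seq i) * dotp (ρ (seq i)) (c (seq (i + 1)) - c (seq i)) := by
    intro i hi
    have hi' := Finset.mem_range.mp hi
    rw [if_pos (by omega), if_pos (by omega)]
  beta_reduce
  rw [Finset.sum_congr rfl hsum, hm, hm1]

lemma chainSet_decomp (x : Vec L) (r : ℝ) (hr : r ∈ chainSet ρ c μ that x) :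
    ∃ t, r - μ t * dotp (ρ t) (x - c t) ∈ chainSet ρ c μ that (c t) := by
  obtain ⟨m, seq, h0, rfl⟩ := hr
  refine ⟨seq m, m, seq, h0, ?_⟩
  unfold chainVal
  rw [sub_self, dotp_zero]
  ring

variable (v : Fin (T + 1) → ℝ)
    (hAf : ∀ t s, v t - v s ≥ μ t * dotp (ρ t) (c t - c s))

include hAf

lemma chain_telescope (m : ℕ) (seq : ℕ → Fin (T + 1)) :
    v (seq m) - v (seq 0)
      ≤ ∑ i ∈ Finset.range m, μ (seq i) * dotp (ρ (seq i)) (c (seq (i + 1)) - c (seq i)) := by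
  induction m with
  | zero => simp
  | succ m ih =>
    rw [Finset.sum_range_succ]
    have h1 := hAf (seq m) (seq (m + 1))
    have h2 : μ (seq m) * dotp (ρ (seq m)) (c (seq (m + 1)) - c (seq m))
        = -(μ (seq m) * dotp (ρ (seq m)) (c (seq m) - c (seq (m + 1)))) := by
      rw [dotp_neg_sub]; ring
    linarith

lemma chainSet_lb (x : Vec L) :
    ∀ r ∈ chainSet ρ c μ that x,
      Finset.univ.inf' Finset.univ_nonempty
        (fun t => v t - v that + μ t * dotp (ρ t) (x - c t)) ≤ r := by
  rintro r ⟨m, seq, h0, rfl⟩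
  have h1 := chain_telescope ρ c μ v hAf m seq
  have h2 : Finset.univ.inf' Finset.univ_nonempty
      (fun t => v t - v that + μ t * dotp (ρ t) (x - c t))
      ≤ v (seq m) - v that + μ (seq m) * dotp (ρ (seq m)) (x - c (seq m)) :=
    Finset.inf'_le _ (Finset.mem_univ (seq m))
  rw [h0] at h1
  unfold chainVal
  linarith

lemma chainSet_bdd (x : Vec L) : BddBelow (chainSet ρ c μ that x) :=
  ⟨_, chainSet_lb ρ c μ that v hAf x⟩

lemma afriatU_le (t : Fin (T + 1)) (x : Vec L) :
    afriatU ρ c μ that x ≤ afriatU ρ c μ that (c t) + μ t * dotp (ρ t) (x - c t) := by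
  have h : afriatU ρ c μ that x - μ t * dotp (ρ t) (x - c t) ≤ afriatU ρ c μ that (c t) := by
    apply le_csInf (chainSet_nonempty ρ c μ that (c t))
    intro r hr
    have := csInf_le (chainSet_bdd ρ c μ that v hAf x) (chainSet_extend ρ c μ that t x r hr)
    unfold afriatU
    linarith
  linarith

lemma afriatU_eq (x : Vec L) :
    afriatU ρ c μ that x = Finset.univ.inf' Finset.univ_nonempty
      (fun t => afriatU ρ c μ that (c t) + μ t * dotp (ρ t) (x - c t)) := by
  apply le_antisymm
  · exact Finset.le_inf' _ _ fun t _ => afriatU_le ρ c μ that v hAf t x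
  · apply le_csInf (chainSet_nonempty ρ c μ that x)
    intro r hr
    obtain ⟨t, ht⟩ := chainSet_decomp ρ c μ that x r hr
    have h2 : afriatU ρ c μ that (c t) ≤ r - μ t * dotp (ρ t) (x - c t) :=
      csInf_le (chainSet_bdd ρ c μ that v hAf (c t)) ht
    have h3 : Finset.univ.inf' Finset.univ_nonempty
        (fun t => afriatU ρ c μ that (c t) + μ t * dotp (ρ t) (x - c t))
        ≤ afriatU ρ c μ that (c t) + μ t * dotp (ρ t) (x - c t) :=
      Finset.inf'_le _ (Finset.mem_univ t)
    linarith

end AfriatAux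

/-- under the Afriat-type inequalities, the infimum defining u is finite
(attained over a nonempty, bounded-below set of chain values) for every point of the
consumption space, u is concave, continuous, and locally nonsatiated on the consumption
space, and for every t the vector μ_t ρ_t is a supergradient of u at c_t. -/


theorem stmt_6 {L T : ℕ} (ρ c : Fin (T + 1) → Vec L) (μ : Fin (T + 1) → ℝ)
    (hρ : ∀ t, PosV (ρ t)) (hc : ∀ t, ConsV (c t)) (hμ : ∀ t, 0 < μ t)
    (v : Fin (T + 1) → ℝ)
    (hAf : ∀ t s, v t - v s ≥ μ t * dotp (ρ t) (c t - c s))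
    (that : Fin (T + 1)) :
    (∀ x : Vec L, ConsV x →
        (chainSet ρ c μ that x).Nonempty ∧ BddBelow (chainSet ρ c μ that x)) ∧
    (∀ x x' : Vec L, ConsV x → ConsV x' → ∀ a : ℝ, 0 ≤ a → a ≤ 1 →
        a * afriatU ρ c μ that x + (1 - a) * afriatU ρ c μ that x'
          ≤ afriatU ρ c μ that (a • x + (1 - a) • x')) ∧
    ContinuousOn (afriatU ρ c μ that) {x | ConsV x} ∧
    (∀ x : Vec L, ConsV x → ∀ ε : ℝ, 0 < ε → ∃ x' : Vec L, ConsV x' ∧ ‖x' - x‖ < ε ∧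
        afriatU ρ c μ that x < afriatU ρ c μ that x') ∧
    (∀ (t : Fin (T + 1)) (x : Vec L), ConsV x →
        afriatU ρ c μ that x - afriatU ρ c μ that (c t) ≤ μ t * dotp (ρ t) (x - c t)) := by
  have hEq := afriatU_eq ρ c μ that v hAf
  refine ⟨?_, ?_, ?_, ?_, ?_⟩
  · -- nonempty and bounded below
    exact fun x _ => ⟨chainSet_nonempty ρ c μ that x, chainSet_bdd ρ c μ that v hAf x⟩
  · -- concavity
    intro x x' _ _ a ha0 ha1
    rw [hEq (a • x + (1 - a) • x')]
    obtain ⟨t, _, ht⟩ := Finset.exists_mem_eq_inf' (Finset.univ_nonempty)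
      (fun t => afriatU ρ c μ that (c t) + μ t * dotp (ρ t) (a • x + (1 - a) • x' - c t))
    rw [ht, dotp_comb]
    have hx := afriatU_le ρ c μ that v hAf t x
    have hx' := afriatU_le ρ c μ that v hAf t x'
    have h1 : a * afriatU ρ c μ that x
        ≤ a * (afriatU ρ c μ that (c t) + μ t * dotp (ρ t) (x - c t)) :=
      mul_le_mul_of_nonneg_left hx ha0
    have h2 : (1 - a) * afriatU ρ c μ that x'
        ≤ (1 - a) * (afriatU ρ c μ that (c t) + μ t * dotp (ρ t) (x' - c t)) :=
      mul_le_mul_of_nonneg_left hx' (by linarith)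
    nlinarith
  · -- continuity
    have hfun : afriatU ρ c μ that = fun x => Finset.univ.inf' Finset.univ_nonempty
        (fun t => afriatU ρ c μ that (c t) + μ t * dotp (ρ t) (x - c t)) := funext hEq
    rw [hfun]
    apply Continuous.continuousOn
    apply Continuous.finset_inf'_apply Finset.univ_nonempty
    intro t _
    have : Continuous fun x : Vec L => dotp (ρ t) (x - c t) := by
      simp only [dotp_sub]
      exact (dotp_cont (ρ t)).sub continuous_const
    fun_prop
  · -- local nonsatiation
    intro x hx ε hε
    have hLne : Nonempty (Fin L) := by
      rcases isEmpty_or_nonempty (Fin L) with h | h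
      · exact absurd (by ext j; exact (h.false j).elim) hx.2
      · exact h
    set N := ‖allOnes L‖ with hN
    have hN0 : 0 ≤ N := norm_nonneg _
    set δ := ε / (2 * (N + 1)) with hδ
    have hδ0 : 0 < δ := by positivity
    refine ⟨x + δ • allOnes L, ⟨?_, ?_⟩, ?_, ?_⟩
    · intro j
      have h1 : (x + δ • allOnes L) j = x j + δ * 1 := rfl
      have := hx.1 j
      rw [h1]; linarith
    · obtain ⟨j₀⟩ := hLne
      intro h0
      have h1 : (x + δ • allOnes L) j₀ = x j₀ + δ * 1 := rfl
      have h2 : (x + δ • allOnes L) j₀ = 0 := by rw [h0]; rfl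
      have := hx.1 j₀
      rw [h1] at h2; linarith
    · rw [add_sub_cancel_left, norm_smul]
      have : |δ| = δ := abs_of_pos hδ0
      rw [Real.norm_eq_abs, this, ← hN]
      have h1 : δ * N ≤ δ * (N + 1) := by nlinarith
      have h2 : δ * (N + 1) = ε / 2 := by
        rw [hδ]; field_simp
      linarith
    · rw [hEq x, hEq (x + δ • allOnes L)]
      obtain ⟨t, _, ht⟩ := Finset.exists_mem_eq_inf' (Finset.univ_nonempty)
        (fun t => afriatU ρ c μ that (c t) + μ t * dotp (ρ t) (x + δ • allOnes L - c t))
      rw [ht]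
      have h1 : Finset.univ.inf' Finset.univ_nonempty
          (fun t => afriatU ρ c μ that (c t) + μ t * dotp (ρ t) (x - c t))
          ≤ afriatU ρ c μ that (c t) + μ t * dotp (ρ t) (x - c t) :=
        Finset.inf'_le _ (Finset.mem_univ t)
      have h2 : x + δ • allOnes L - c t = (x - c t) + δ • allOnes L :=
        add_sub_right_comm x (δ • allOnes L) (c t)
      rw [h2, dotp_add_smul]
      have hS : 0 < dotp (ρ t) (allOnes L) := by
        apply Finset.sum_pos _ Finset.univ_nonempty
        intro j _
        have := hρ t j
        rw [allOnes_apply]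
        linarith
      have h3 : 0 < μ t * (δ * dotp (ρ t) (allOnes L)) :=
        mul_pos (hμ t) (mul_pos hδ0 hS)
      nlinarith
  · -- supergradient
    intro t x _
    have := afriatU_le ρ c μ that v hAf t x
    linarith

end
end

section
/- Let (Ω, F, P) be a probability space, let ρ₀ = (1,1)ᵀ and ρ₁ = (2,2)ᵀ be deterministic price vectors in ℝ², and let c₀ = (1,1)ᵀ and c₁ = (2,2)ᵀ be (almost surely constant) observed consumption vectors. Then there do NOT exist random variables d and α with values in (0,1] almost surely, strictly positive random variables w̃₁, w̃₂ (time-invariant multiplicative price measurement errors, defining ρ*_t = (w̃₁ ρ_{t,1}, w̃₂ ρ_{t,2})ᵀ for t = 0,1), random vectors c*₀, c*₁ with values in ℝ²_+, and real-valued random variables v₀, v₁ such that: (a) almost surely v₁ − v₀ ≥ (1/d) ρ*₁ᵀ(c*₁ − c*₀) and v₀ − v₁ ≥ ρ*₀ᵀ(c*₀ − c*₁); and (b) for t = 0,1 the random variables α ρ*_tᵀ c*_t are integrable with E[α ρ*_tᵀ c*_t] = E[α ρ_tᵀ c_t]. -/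
open MeasureTheory Filter Topology

noncomputable section

/-- with deterministic prices ρ₀ = (1,1), ρ₁ = (2,2) and (a.s. constant)
observed consumptions c₀ = (1,1), c₁ = (2,2), there are no latent variables — a discount
factor d ∈ (0,1], weights α ∈ (0,1], strictly positive time-invariant multiplicative price
measurement errors w̃₁, w̃₂ (so ρ*_t = (w̃₁ ρ_{t,1}, w̃₂ ρ_{t,2})), true consumptions
c*₀, c*₁ ∈ ℝ²₊, and utility numbers v₀, v₁ — satisfying (a) the almost-sure Afriat
inequalities v₁ − v₀ ≥ (1/d) ρ*₁ᵀ(c*₁ − c*₀) and v₀ − v₁ ≥ ρ*₀ᵀ(c*₀ − c*₁), together with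
(b) the weighted mean-budget-neutrality conditions E[α ρ*_tᵀ c*_t] = E[α ρ_tᵀ c_t]
(ρ₀ᵀc₀ = 2 and ρ₁ᵀc₁ = 8). -/
theorem stmt_14 {Ω : Type*} [MeasurableSpace Ω] (P : Measure Ω) [IsProbabilityMeasure P] :
    ¬ ∃ (d α w₁ w₂ v₀ v₁ : Ω → ℝ) (cs₀ cs₁ : Ω → Fin 2 → ℝ),
        (∀ᵐ ω ∂P, 0 < d ω ∧ d ω ≤ 1) ∧
        (∀ᵐ ω ∂P, 0 < α ω ∧ α ω ≤ 1) ∧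
        (∀ᵐ ω ∂P, 0 < w₁ ω ∧ 0 < w₂ ω) ∧
        (∀ᵐ ω ∂P, ∀ j, 0 ≤ cs₀ ω j) ∧
        (∀ᵐ ω ∂P, ∀ j, 0 ≤ cs₁ ω j) ∧
        (∀ᵐ ω ∂P, v₁ ω - v₀ ω ≥
            (d ω)⁻¹ * ((w₁ ω * 2) * (cs₁ ω 0 - cs₀ ω 0) + (w₂ ω * 2) * (cs₁ ω 1 - cs₀ ω 1))) ∧
        (∀ᵐ ω ∂P, v₀ ω - v₁ ω ≥
            (w₁ ω * 1) * (cs₀ ω 0 - cs₁ ω 0) + (w₂ ω * 1) * (cs₀ ω 1 - cs₁ ω 1)) ∧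
        Integrable α P ∧
        Integrable (fun ω => α ω * ((w₁ ω * 1) * cs₀ ω 0 + (w₂ ω * 1) * cs₀ ω 1)) P ∧
        Integrable (fun ω => α ω * ((w₁ ω * 2) * cs₁ ω 0 + (w₂ ω * 2) * cs₁ ω 1)) P ∧
        (∫ ω, α ω * ((w₁ ω * 1) * cs₀ ω 0 + (w₂ ω * 1) * cs₀ ω 1) ∂P =
          ∫ ω, α ω * 2 ∂P) ∧
        (∫ ω, α ω * ((w₁ ω * 2) * cs₁ ω 0 + (w₂ ω * 2) * cs₁ ω 1) ∂P =
          ∫ ω, α ω * 8 ∂P) := by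
  rintro ⟨d, α, w₁, w₂, v₀, v₁, cs₀, cs₁, hd, hα, hw, hc₀, hc₁, hA1, hA2,
    hintα, hint0, hint1, heq0, heq1⟩
  -- a.s. pointwise comparison
  have key : ∀ᵐ ω ∂P, α ω * ((w₁ ω * 2) * cs₁ ω 0 + (w₂ ω * 2) * cs₁ ω 1) ≤
      2 * (α ω * ((w₁ ω * 1) * cs₀ ω 0 + (w₂ ω * 1) * cs₀ ω 1)) := by
    filter_upwards [hd, hα, hw, hA1, hA2] with ω ⟨hd1, hd2⟩ ⟨ha1, _⟩ ⟨hw1, hw2⟩ h1 h2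
    set T := w₁ ω * cs₁ ω 0 + w₂ ω * cs₁ ω 1 with hT
    set S := w₁ ω * cs₀ ω 0 + w₂ ω * cs₀ ω 1 with hS
    have hinv : (1:ℝ) ≤ (d ω)⁻¹ := by
      exact one_le_inv_iff₀.mpr ⟨hd1, hd2⟩
    have hsum : 0 ≥ (d ω)⁻¹ * (2 * (T - S)) + (S - T) := by
      have := add_le_add h1 h2
      nlinarith [this]
    have hTS : T ≤ S := by nlinarith [hsum, hinv]
    have : α ω * (2 * T) ≤ α ω * (2 * S) := by
      apply mul_le_mul_of_nonneg_left (by linarith) ha1.le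
    nlinarith [this]
  have hmono : ∫ ω, α ω * ((w₁ ω * 2) * cs₁ ω 0 + (w₂ ω * 2) * cs₁ ω 1) ∂P ≤
      ∫ ω, 2 * (α ω * ((w₁ ω * 1) * cs₀ ω 0 + (w₂ ω * 1) * cs₀ ω 1)) ∂P :=
    integral_mono_ae hint1 (hint0.const_mul 2) key
  rw [integral_const_mul, heq0, heq1] at hmono
  have h8 : ∫ ω, α ω * 8 ∂P = (∫ ω, α ω ∂P) * 8 := integral_mul_const 8 α
  have h2 : ∫ ω, α ω * 2 ∂P = (∫ ω, α ω ∂P) * 2 := integral_mul_const 2 α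
  rw [h8, h2] at hmono
  have hpos : 0 < ∫ ω, α ω ∂P := by
    have hne : 0 ≤ᵐ[P] α := hα.mono fun ω h => h.1.le
    have hcompl : P (Function.support α)ᶜ = 0 := by
      have hmem : ∀ᵐ ω ∂P, ω ∈ Function.support α := hα.mono fun ω h => ne_of_gt h.1
      simpa [Function.support, Set.compl_setOf, ae_iff] using hmem
    have hsup : P (Function.support α) ≠ 0 := by
      intro h0
      have hle := measure_union_le (μ := P) (Function.support α) (Function.support α)ᶜ
      rw [Set.union_compl_self, h0, hcompl, measure_univ] at hle
      simp at hle
    exact (integral_pos_iff_support_of_nonneg_ae hne hintα).mpr (pos_iff_ne_zero.mpr hsup)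
  linarith

end
end

section
/- Let (Ω, F, P) be a probability space, let ε ∈ (0, 1/8), and let p₀ = (1,2)ᵀ and p₁ = (2,1)ᵀ be deterministic price vectors in ℝ². Let c₀ be a random vector equal to (ε, 1 − ε/2)ᵀ with probability 1/2 and to (ε, 3/4 − ε/2)ᵀ with probability 1/2, and let c₁ be a random vector equal to (1 − ε/2, ε)ᵀ with probability 1/2 and to (3/4 − ε/2, ε)ᵀ with probability 1/2. Then there do NOT exist random vectors c*₀, c*₁ with values in ℝ²_+ such that: (a) p_tᵀ c*_t = p_tᵀ c_t almost surely for t = 0,1; (b) c*₀ and c*₁ are integrable with E[c*_t] = E[c_t] for t = 0,1; and (c) almost surely it is NOT the case that both p₀ᵀ c*₁ < p₀ᵀ c*₀ and p₁ᵀ c*₀ < p₁ᵀ c*₁. Equivalently, any random vectors c*₀, c*₁ satisfying (a) and (b) violate GARP (exhibit the strict two-way revealed-preference cycle p₀ᵀ c*₁ < p₀ᵀ c*₀ and p₁ᵀ c*₀ < p₁ᵀ c*₁) with strictly positive probability. -/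
/-!
Each observed budget p_tᵀ c_t is at least 3/2. If the true consumptions avoid the strict cycle at ω,
one of the cross costs p₀ᵀ c*₁, p₁ᵀ c*₀ is at least its own budget, hence ≥ 3/2, while the other is
at least half of a budget, hence ≥ 3/4, because c* ≥ 0 and the price vectors are (1,2) and (2,1).
So p₀ᵀ c*₁ + p₁ᵀ c*₀ ≥ 9/4 almost surely, whereas by condition (b) its mean is
p₀ᵀ E c₁ + p₁ᵀ E c₀ = 7/4 + 3ε < 9/4.
-/

open MeasureTheory

section TwoPointLaw

variable {Ω α : Type*} [MeasurableSpace Ω] {P : Measure Ω} [IsProbabilityMeasure P]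
  [MeasurableSpace α] [MeasurableSingletonClass α] {f : Ω → α} {v w : α}

lemma ae_eq_or_eq_of_measure_eq_half (hf : Measurable f) (hvw : v ≠ w)
    (hv : P {ω | f ω = v} = 1 / 2) (hw : P {ω | f ω = w} = 1 / 2) :
    ∀ᵐ ω ∂P, f ω = v ∨ f ω = w := by
  have hdisj : Disjoint {ω | f ω = v} {ω | f ω = w} :=
    Set.disjoint_left.2 fun ω hv hw => hvw (hv.symm.trans hw)
  have hunion : P ({ω | f ω = v} ∪ {ω | f ω = w}) = 1 := by
    rw [measure_union hdisj (hf (measurableSet_singleton w)), hv, hw, ENNReal.add_halves]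
  exact (prob_compl_eq_zero_iff ((hf (measurableSet_singleton v)).union
    (hf (measurableSet_singleton w)))).2 hunion

lemma integral_comp_eq_of_measure_eq_half (hf : Measurable f) (hvw : v ≠ w)
    (hv : P {ω | f ω = v} = 1 / 2) (hw : P {ω | f ω = w} = 1 / 2) (φ : α → ℝ) :
    ∫ ω, φ (f ω) ∂P = (φ v + φ w) / 2 := by
  have hAm : MeasurableSet {ω | f ω = v} := hf (measurableSet_singleton v)
  have hBm : MeasurableSet {ω | f ω = w} := hf (measurableSet_singleton w)
  have hsplit : (fun ω => φ (f ω)) =ᵐ[P] fun ω =>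
      {ω | f ω = v}.indicator (fun _ => φ v) ω + {ω | f ω = w}.indicator (fun _ => φ w) ω := by
    filter_upwards [ae_eq_or_eq_of_measure_eq_half hf hvw hv hw] with ω hω
    rcases hω with h | h
    · simp [Set.indicator, h, hvw]
    · simp [Set.indicator, h, hvw.symm]
  rw [integral_congr_ae hsplit,
    integral_add ((integrable_const _).indicator hAm) ((integrable_const _).indicator hBm),
    integral_indicator_const _ hAm, integral_indicator_const _ hBm,
    measureReal_def, measureReal_def, hv, hw]
  simp only [one_div, ENNReal.toReal_inv, ENNReal.toReal_ofNat, smul_eq_mul]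
  ring

end TwoPointLaw

lemma three_halves_mul_le_of_not_strict_cycle {x₀ x₁ : Fin 2 → ℝ} {m : ℝ}
    (hx₀ : ∀ j, 0 ≤ x₀ j) (hx₁ : ∀ j, 0 ≤ x₁ j)
    (hm₀ : m ≤ x₀ 0 + 2 * x₀ 1) (hm₁ : m ≤ 2 * x₁ 0 + x₁ 1)
    (hcycle : ¬(x₁ 0 + 2 * x₁ 1 < x₀ 0 + 2 * x₀ 1 ∧ 2 * x₀ 0 + x₀ 1 < 2 * x₁ 0 + x₁ 1)) :
    3 / 2 * m ≤ (x₁ 0 + 2 * x₁ 1) + (2 * x₀ 0 + x₀ 1) := by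
  have := hx₀ 0; have := hx₀ 1; have := hx₁ 0; have := hx₁ 1
  rcases not_and_or.1 hcycle with h | h <;> rw [not_lt] at h <;> linarith

theorem stmt_15_general {Ω : Type*} [MeasurableSpace Ω] (P : Measure Ω) [IsProbabilityMeasure P]
    (ε : ℝ) (hε8 : ε < 1 / 8)
    (c₀ c₁ : Ω → Fin 2 → ℝ) (hm₀ : Measurable c₀) (hm₁ : Measurable c₁)
    (h₀a : P {ω | c₀ ω = ![ε, 1 - ε / 2]} = 1 / 2)
    (h₀b : P {ω | c₀ ω = ![ε, 3 / 4 - ε / 2]} = 1 / 2)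
    (h₁a : P {ω | c₁ ω = ![1 - ε / 2, ε]} = 1 / 2)
    (h₁b : P {ω | c₁ ω = ![3 / 4 - ε / 2, ε]} = 1 / 2) :
    ¬ ∃ cs₀ cs₁ : Ω → Fin 2 → ℝ,
        (∀ᵐ ω ∂P, ∀ j, 0 ≤ cs₀ ω j) ∧
        (∀ᵐ ω ∂P, ∀ j, 0 ≤ cs₁ ω j) ∧
        (∀ᵐ ω ∂P, cs₀ ω 0 + 2 * cs₀ ω 1 = c₀ ω 0 + 2 * c₀ ω 1) ∧
        (∀ᵐ ω ∂P, 2 * cs₁ ω 0 + cs₁ ω 1 = 2 * c₁ ω 0 + c₁ ω 1) ∧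
        (∀ j, Integrable (fun ω => cs₀ ω j) P) ∧
        (∀ j, Integrable (fun ω => cs₁ ω j) P) ∧
        (∀ j, ∫ ω, cs₀ ω j ∂P = ∫ ω, c₀ ω j ∂P) ∧
        (∀ j, ∫ ω, cs₁ ω j ∂P = ∫ ω, c₁ ω j ∂P) ∧
        (∀ᵐ ω ∂P, ¬((cs₁ ω 0 + 2 * cs₁ ω 1 < cs₀ ω 0 + 2 * cs₀ ω 1) ∧
            (2 * cs₀ ω 0 + cs₀ ω 1 < 2 * cs₁ ω 0 + cs₁ ω 1))) := by
  rintro ⟨cs₀, cs₁, hn₀, hn₁, hb₀, hb₁, hi₀, hi₁, he₀, he₁, hgarp⟩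
  have hne₀ : (![ε, 1 - ε / 2] : Fin 2 → ℝ) ≠ ![ε, 3 / 4 - ε / 2] := by
    norm_num [funext_iff, Fin.forall_fin_two]
  have hne₁ : (![1 - ε / 2, ε] : Fin 2 → ℝ) ≠ ![3 / 4 - ε / 2, ε] := by
    norm_num [funext_iff, Fin.forall_fin_two]
  have hbudget₀ : ∀ᵐ ω ∂P, 3 / 2 ≤ c₀ ω 0 + 2 * c₀ ω 1 := by
    filter_upwards [ae_eq_or_eq_of_measure_eq_half hm₀ hne₀ h₀a h₀b] with ω h
    rcases h with h | h <;> simp only [h, Matrix.cons_val_zero, Matrix.cons_val_one,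
      Matrix.cons_val_fin_one] <;> linarith
  have hbudget₁ : ∀ᵐ ω ∂P, 3 / 2 ≤ 2 * c₁ ω 0 + c₁ ω 1 := by
    filter_upwards [ae_eq_or_eq_of_measure_eq_half hm₁ hne₁ h₁a h₁b] with ω h
    rcases h with h | h <;> simp only [h, Matrix.cons_val_zero, Matrix.cons_val_one,
      Matrix.cons_val_fin_one] <;> linarith
  have hlower :
      ∀ᵐ ω ∂P, 3 / 2 * (3 / 2) ≤ (cs₁ ω 0 + 2 * cs₁ ω 1) + (2 * cs₀ ω 0 + cs₀ ω 1) := by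
    filter_upwards [hn₀, hn₁, hb₀, hb₁, hgarp, hbudget₀, hbudget₁] with ω n₀ n₁ b₀ b₁ g m₀ m₁
    exact three_halves_mul_le_of_not_strict_cycle n₀ n₁ (m₀.trans_eq b₀.symm)
      (m₁.trans_eq b₁.symm) g
  have hint₁ : Integrable (fun ω => cs₁ ω 0 + 2 * cs₁ ω 1) P :=
    (hi₁ 0).add ((hi₁ 1).const_mul 2)
  have hint₀ : Integrable (fun ω => 2 * cs₀ ω 0 + cs₀ ω 1) P :=
    ((hi₀ 0).const_mul 2).add (hi₀ 1)
  have hmean : ∫ ω, (cs₁ ω 0 + 2 * cs₁ ω 1) + (2 * cs₀ ω 0 + cs₀ ω 1) ∂P = 7 / 4 + 3 * ε := by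
    rw [integral_add hint₁ hint₀,
      integral_add (hi₁ 0) ((hi₁ 1).const_mul 2), integral_add ((hi₀ 0).const_mul 2) (hi₀ 1),
      integral_const_mul, integral_const_mul, he₀, he₀, he₁, he₁,
      integral_comp_eq_of_measure_eq_half hm₀ hne₀ h₀a h₀b (· 0),
      integral_comp_eq_of_measure_eq_half hm₀ hne₀ h₀a h₀b (· 1),
      integral_comp_eq_of_measure_eq_half hm₁ hne₁ h₁a h₁b (· 0),
      integral_comp_eq_of_measure_eq_half hm₁ hne₁ h₁a h₁b (· 1)]
    simp only [Matrix.cons_val_zero, Matrix.cons_val_one, Matrix.cons_val_fin_one]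
    ring
  have hle := integral_mono_ae (integrable_const _) (hint₁.add hint₀) hlower
  simp only [Pi.add_apply, hmean, integral_const, probReal_univ, one_smul] at hle
  linarith

/-- with deterministic prices p₀ = (1,2), p₁ = (2,1) and observed consumptions
c₀ ∈ {(ε, 1−ε/2), (ε, 3/4−ε/2)} and c₁ ∈ {(1−ε/2, ε), (3/4−ε/2, ε)}, each value taken with
probability 1/2, and 0 < ε < 1/8, there are no true consumptions c*₀, c*₁ ∈ ℝ²₊ that
(a) lie almost surely on the same budget lines (p_tᵀ c*_t = p_tᵀ c_t), (b) are integrable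
with E[c*_t] = E[c_t] (trembling-hand centering), and (c) almost surely avoid the strict
two-way revealed-preference cycle p₀ᵀ c*₁ < p₀ᵀ c*₀ and p₁ᵀ c*₀ < p₁ᵀ c*₁ (GARP). -/
theorem stmt_15 {Ω : Type*} [MeasurableSpace Ω] (P : Measure Ω) [IsProbabilityMeasure P]
    (ε : ℝ) (hε0 : 0 < ε) (hε8 : ε < 1 / 8)
    (c₀ c₁ : Ω → Fin 2 → ℝ) (hm₀ : Measurable c₀) (hm₁ : Measurable c₁)
    (h₀a : P {ω | c₀ ω = ![ε, 1 - ε / 2]} = 1 / 2)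
    (h₀b : P {ω | c₀ ω = ![ε, 3 / 4 - ε / 2]} = 1 / 2)
    (h₁a : P {ω | c₁ ω = ![1 - ε / 2, ε]} = 1 / 2)
    (h₁b : P {ω | c₁ ω = ![3 / 4 - ε / 2, ε]} = 1 / 2) :
    ¬ ∃ cs₀ cs₁ : Ω → Fin 2 → ℝ,
        (∀ᵐ ω ∂P, ∀ j, 0 ≤ cs₀ ω j) ∧
        (∀ᵐ ω ∂P, ∀ j, 0 ≤ cs₁ ω j) ∧
        (∀ᵐ ω ∂P, cs₀ ω 0 + 2 * cs₀ ω 1 = c₀ ω 0 + 2 * c₀ ω 1) ∧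
        (∀ᵐ ω ∂P, 2 * cs₁ ω 0 + cs₁ ω 1 = 2 * c₁ ω 0 + c₁ ω 1) ∧
        (∀ j, Integrable (fun ω => cs₀ ω j) P) ∧
        (∀ j, Integrable (fun ω => cs₁ ω j) P) ∧
        (∀ j, ∫ ω, cs₀ ω j ∂P = ∫ ω, c₀ ω j ∂P) ∧
        (∀ j, ∫ ω, cs₁ ω j ∂P = ∫ ω, c₁ ω j ∂P) ∧
        (∀ᵐ ω ∂P, ¬((cs₁ ω 0 + 2 * cs₁ ω 1 < cs₀ ω 0 + 2 * cs₀ ω 1) ∧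
            (2 * cs₀ ω 0 + cs₀ ω 1 < 2 * cs₁ ω 0 + cs₁ ω 1))) :=
  stmt_15_general P ε hε8 c₀ c₁ hm₀ hm₁ h₀a h₀b h₁a h₁b
end
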